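/- The Gödel spacetime is not Ricci-pseudosymmetric: at every point of ℝ⁴ the (0,4)-tensors R·S and Q(g,S) are linearly independent; in particular there is no real number L with R·S = L·Q(g,S) at any point. -/

import Mathlib

noncomputable section

open scoped BigOperators

/-- A point of `ℝⁿ`. -/
abbrev Pt (n : ℕ) := Fin n → ℝ
/-- A (0,2)-tensor field on `ℝⁿ`, given by its components. -/
abbrev Ten2 (n : ℕ) := Pt n → Fin n → Fin n → ℝ
/-- A (0,4)-tensor field on `ℝⁿ`, given by its components. -/
abbrev Ten4 (n : ℕ) := Pt n → Fin n → Fin n → Fin n → Fin n → ℝ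

variable {n : ℕ}

/-- Partial derivative `∂ᵢ f` at `x`. -/
def pderiv (i : Fin n) (f : Pt n → ℝ) (x : Pt n) : ℝ :=
  fderiv ℝ f x (Pi.single i 1)

/-- Components `g^{ij}` of the inverse of the metric. -/
def ginv (g : Ten2 n) (x : Pt n) (i j : Fin n) : ℝ :=
  (Matrix.of (g x))⁻¹ i j

/-- Christoffel symbols of the second kind, `Γ^h_{ij}` as a function of the point. -/
def christoffel (g : Ten2 n) (h i j : Fin n) (x : Pt n) : ℝ :=
  (1/2) * ∑ l, ginv g x h l *
    (pderiv i (fun y => g y l j) x + pderiv j (fun y => g y i l) x - pderiv l (fun y => g y i j) x)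

/-- Curvature components `R^h_{ijk}`. -/
def curvUp (g : Ten2 n) (h i j k : Fin n) (x : Pt n) : ℝ :=
  pderiv j (christoffel g h i k) x - pderiv k (christoffel g h i j) x
    + ∑ l, christoffel g h j l x * christoffel g l i k x
    - ∑ l, christoffel g h k l x * christoffel g l i j x

/-- The (0,4) Riemann–Christoffel curvature tensor `R_{hijk} = g_{hl} R^l_{ijk}`. -/
def riemann (g : Ten2 n) : Ten4 n := fun x h i j k => ∑ l, g x h l * curvUp g l i j k x

/-- The Ricci tensor `S_{ij} = R^k_{ikj}`. -/
def ricci (g : Ten2 n) : Ten2 n := fun x i j => ∑ k, curvUp g k i k j x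

/-- The scalar curvature `κ = g^{ij} S_{ij}`. -/
def scalarCurv (g : Ten2 n) (x : Pt n) : ℝ := ∑ i, ∑ j, ginv g x i j * ricci g x i j

/-- Components `S_{ij,k}` of the covariant derivative of the Ricci tensor. -/
def ricciCov (g : Ten2 n) (x : Pt n) (i j k : Fin n) : ℝ :=
  pderiv k (fun y => ricci g y i j) x
    - ∑ l, christoffel g l k i x * ricci g x l j
    - ∑ l, christoffel g l k j x * ricci g x i l

/-- The Kulkarni–Nomizu product of two symmetric (0,2)-tensors. -/
def kn (A B : Ten2 n) : Ten4 n := fun x X1 X2 X3 X4 =>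
  A x X1 X4 * B x X2 X3 + A x X2 X3 * B x X1 X4 - A x X1 X3 * B x X2 X4 - A x X2 X4 * B x X1 X3

/-- The Gaussian curvature tensor `G = (1/2) g ∧ g`. -/
def Gten (g : Ten2 n) : Ten4 n := fun x i j k l => (1/2) * kn g g x i j k l

/-- The Weyl conformal curvature tensor
`C = R − (1/(n−2)) g∧S + (κ/((n−2)(n−1))) G`. -/
def weyl (g : Ten2 n) : Ten4 n := fun x h i j k =>
  riemann g x h i j k - (1/((n:ℝ)-2)) * kn g (ricci g) x h i j k
    + (scalarCurv g x / (((n:ℝ)-2)*((n:ℝ)-1))) * Gten g x h i j k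

/-- The conharmonic curvature tensor `conh(R) = R − (1/(n−2)) g∧S`. -/
def conh (g : Ten2 n) : Ten4 n := fun x h i j k =>
  riemann g x h i j k - (1/((n:ℝ)-2)) * kn g (ricci g) x h i j k

/-- The concircular curvature tensor `K = R − (κ/(n(n−1))) G`. -/
def concirc (g : Ten2 n) : Ten4 n := fun x h i j k =>
  riemann g x h i j k - (scalarCurv g x / ((n:ℝ)*((n:ℝ)-1))) * Gten g x h i j k

/-- The (0,6)-tensor `T·T'` for (0,4)-tensors `T, T'`: the curvature-type tensor `T`
acts as a derivation (through the endomorphisms `𝒯(X,Y)` with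
`g(𝒯(X,Y)Z,W) = T(X,Y,Z,W)`) on the (0,4)-tensor `T'`. -/
def dot44 (g : Ten2 n) (T T' : Ten4 n) :
    Pt n → Fin n → Fin n → Fin n → Fin n → Fin n → Fin n → ℝ :=
  fun x h i j k l m =>
  -(∑ r, ∑ s, ginv g x r s *
    (T x l m h s * T' x r i j k + T x l m i s * T' x h r j k
      + T x l m j s * T' x h i r k + T x l m k s * T' x h i j r))

/-- The (0,4)-tensor `T·A` for a (0,4)-tensor `T` acting on a (0,2)-tensor `A`. -/
def dot42 (g : Ten2 n) (T : Ten4 n) (A : Ten2 n) :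
    Pt n → Fin n → Fin n → Fin n → Fin n → ℝ :=
  fun x i j l m =>
  -(∑ r, ∑ s, ginv g x r s * (T x l m i s * A x r j + T x l m j s * A x i r))

/-- The Tachibana tensor `Q(A,T')` of a symmetric (0,2)-tensor `A`
and a (0,4)-tensor `T'`, built from the endomorphisms `X ∧_A Y`. -/
def tach4 (A : Ten2 n) (T' : Ten4 n) :
    Pt n → Fin n → Fin n → Fin n → Fin n → Fin n → Fin n → ℝ :=
  fun x h i j k l m =>
  -((A x m h * T' x l i j k - A x l h * T' x m i j k)
    + (A x m i * T' x h l j k - A x l i * T' x h m j k)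
    + (A x m j * T' x h i l k - A x l j * T' x h i m k)
    + (A x m k * T' x h i j l - A x l k * T' x h i j m))

/-- The Tachibana tensor `Q(A,B)` of a symmetric (0,2)-tensor `A`
and a (0,2)-tensor `B`. -/
def tach2 (A B : Ten2 n) : Pt n → Fin n → Fin n → Fin n → Fin n → ℝ :=
  fun x i j l m =>
  -((A x m i * B x l j - A x l i * B x m j) + (A x m j * B x i l - A x l j * B x i m))

/-- The Gödel metric on `ℝ⁴`: `g₁₁ = −a²`, `g₂₂ = (a²/2)e^{2x¹}`, `g₃₃ = −a²`,
`g₄₄ = a²`, `g₂₄ = g₄₂ = a²e^{x¹}`, all other components zero. -/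
def godel (a : ℝ) : Ten2 4 := fun x i j =>
  ![![-a^2, 0, 0, 0],
    ![0, a^2/2 * Real.exp (2 * x 0), 0, a^2 * Real.exp (x 0)],
    ![0, 0, -a^2, 0],
    ![0, a^2 * Real.exp (x 0), 0, a^2]] i j

/-! The Ricci tensor of the Gödel metric is `S = ω ⊗ ω` with `ω = a⁻² g(∂₄, ·) = e^{x¹} dx² + dx⁴`,
so `g⁻¹ω = a⁻² ∂₄` and `(R·S)(X₁, X₂; X, Y) = -a⁻² (R(X, Y, X₁, ∂₄) ω(X₂) + R(X, Y, X₂, ∂₄) ω(X₁))`.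
The `x³`-direction is flat: every Christoffel symbol with a lower index `3` vanishes, hence so does
every curvature component `R(∂₂, ∂₃, ·, ·)`. Therefore `(R·S)(∂₂, ∂₃; ∂₂, ∂₃) = 0`, while
`Q(g, S)(∂₂, ∂₃; ∂₂, ∂₃) = a² e^{2x¹} ≠ 0` and `(R·S)(∂₁, ∂₂; ∂₁, ∂₂) = e^{2x¹} / 2 ≠ 0`; so `R·S`
is not a multiple of `Q(g, S)`. In Lean the coordinates are indexed from `0`: `∂₁, …, ∂₄` are `0, …, 3`.
-/

theorem Real.exp_two_mul (t : ℝ) : Real.exp (2 * t) = Real.exp t ^ 2 := by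
  rw [two_mul, Real.exp_add, sq]

/-- Every Christoffel symbol of the Gödel metric has the form `c e^{k x¹}`. -/
abbrev expMono (p : Fin n) (c k : ℝ) : Pt n → ℝ := fun y => c * Real.exp (k * y p)

theorem pderiv_expMono (p i : Fin n) (c k : ℝ) (x : Pt n) :
    pderiv i (expMono p c k) x = if i = p then c * k * Real.exp (k * x p) else 0 := by
  have hp := hasFDerivAt_apply (𝕜 := ℝ) p x
  rw [pderiv, (((hp.const_mul k).exp).const_mul c).fderiv]
  by_cases h : i = p <;> simp [h, eq_comm]
  ring

theorem pderiv_const_mul_exp (p i : Fin n) (c : ℝ) (x : Pt n) :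
    pderiv i (fun y => c * Real.exp (y p)) x = if i = p then c * Real.exp (x p) else 0 := by
  have h : (fun y : Pt n => c * Real.exp (y p)) = expMono p c 1 := by
    funext y; simp [expMono]
  simp [h, pderiv_expMono]

theorem pderiv_const (i : Fin n) (c : ℝ) (x : Pt n) : pderiv i (fun _ => c) x = 0 := by
  simp [pderiv]

theorem pderiv_zero (i : Fin n) (x : Pt n) : pderiv i (0 : Pt n → ℝ) x = 0 :=
  pderiv_const i 0 x

theorem pderiv_one (i : Fin n) (x : Pt n) : pderiv i (1 : Pt n → ℝ) x = 0 :=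
  pderiv_const i 1 x

theorem riemann_eq_zero_of_christoffel_eq_zero {g : Ten2 n} {i : Fin n}
    (hΓ : ∀ p q, christoffel g p i q = 0) (x : Pt n) (h j k : Fin n) :
    riemann g x h i j k = 0 := by
  simp [riemann, curvUp, hΓ, pderiv_zero]

theorem dot42_of_eq_mul_self {g : Ten2 n} {T : Ten4 n} {A : Ten2 n} {x : Pt n}
    {ω : Fin n → ℝ} {p : Fin n} {c : ℝ} (hA : ∀ i j, A x i j = ω i * ω j)
    (hω : ∀ s, ∑ r, ginv g x r s * ω r = (Pi.single p c : Fin n → ℝ) s)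
    (i j l m : Fin n) :
    dot42 g T A x i j l m = -(c * (T x l m i p * ω j + T x l m j p * ω i)) := by
  have hterm : ∀ r s, ginv g x r s * (T x l m i s * A x r j + T x l m j s * A x i r)
      = ginv g x r s * ω r * (T x l m i s * ω j + T x l m j s * ω i) := by
    intro r s
    rw [hA, hA]
    ring
  simp only [dot42, hterm]
  rw [Finset.sum_comm]
  simp_rw [← Finset.sum_mul, hω]
  simp [Pi.single_apply]

def componentDual (i j l m : Fin n) :
    Module.Dual ℝ (Fin n → Fin n → Fin n → Fin n → ℝ) :=
  LinearMap.proj m ∘ₗ LinearMap.proj l ∘ₗ LinearMap.proj j ∘ₗ LinearMap.proj i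

@[simp]
theorem componentDual_apply (i j l m : Fin n) (v : Fin n → Fin n → Fin n → Fin n → ℝ) :
    componentDual i j l m v = v i j l m :=
  rfl

theorem LinearIndependent.pair_of_dual {K M : Type*} [Field K] [AddCommGroup M] [Module K M]
    {v w : M} (φ ψ : Module.Dual K M) (hφv : φ v ≠ 0) (hψv : ψ v = 0) (hψw : ψ w ≠ 0) :
    LinearIndependent K ![v, w] := by
  refine LinearIndependent.pair_iff.mpr fun s t hst => ?_
  have ht : t = 0 := by simpa [hψv, hψw] using congrArg ψ hst
  subst ht
  simpa [hφv] using congrArg φ hst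

theorem LinearIndependent.pair_ne_smul {K M : Type*} [Field K] [AddCommGroup M] [Module K M]
    {v w : M} (h : LinearIndependent K ![v, w]) (L : K) : v ≠ L • w := by
  intro hv
  simpa using LinearIndependent.pair_iff.mp h 1 (-L) (by simp [hv])

def godelInv (a : ℝ) (x : Pt 4) : Matrix (Fin 4) (Fin 4) ℝ :=
  (a ^ 2)⁻¹ • !![-1, 0, 0, 0;
    0, -2 / Real.exp (x 0) ^ 2, 0, 2 / Real.exp (x 0);
    0, 0, -1, 0;
    0, 2 / Real.exp (x 0), 0, -1]

theorem ginv_godel {a : ℝ} (ha : a ≠ 0) (x : Pt 4) : ginv (godel a) x = godelInv a x := by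
  have hinv : (Matrix.of (godel a x))⁻¹ = godelInv a x := by
    apply Matrix.inv_eq_right_inv
    ext i j
    fin_cases i <;> fin_cases j <;>
      simp [Matrix.mul_apply, Fin.sum_univ_four, godel, godelInv, Real.exp_two_mul] <;>
      field_simp <;> ring
  funext i j
  rw [ginv, hinv]

def godelChristoffel : Fin 4 → Fin 4 → Fin 4 → Pt 4 → ℝ :=
  ![![0, ![0, expMono 0 (1/2) 2, 0, expMono 0 (1/2) 1], 0, ![0, expMono 0 (1/2) 1, 0, 0]],
    ![![0, 0, 0, expMono 0 (-1) (-1)], 0, 0, ![expMono 0 (-1) (-1), 0, 0, 0]],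
    0,
    ![![0, expMono 0 (1/2) 1, 0, 1], ![expMono 0 (1/2) 1, 0, 0, 0], 0, ![1, 0, 0, 0]]]

theorem christoffel_godel {a : ℝ} (ha : a ≠ 0) (h i j : Fin 4) :
    christoffel (godel a) h i j = godelChristoffel h i j := by
  funext x
  fin_cases h <;> fin_cases i <;> fin_cases j <;>
    simp [christoffel, ginv_godel ha, godel, Fin.sum_univ_four,
      pderiv_expMono, pderiv_const_mul_exp, pderiv_const] <;>
    simp [godelInv, godelChristoffel, Real.exp_two_mul, Real.exp_neg] <;>
    field_simp <;> ring

theorem christoffel_godel_two {a : ℝ} (ha : a ≠ 0) (p q : Fin 4) :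
    christoffel (godel a) p 2 q = 0 := by
  rw [christoffel_godel ha]
  fin_cases p <;> fin_cases q <;> rfl

/-- The 1-form `a⁻² g(∂₄, ·)`. -/
def godelOneForm (x : Pt 4) : Fin 4 → ℝ := ![0, Real.exp (x 0), 0, 1]

theorem ricci_godel {a : ℝ} (ha : a ≠ 0) (x : Pt 4) (i j : Fin 4) :
    ricci (godel a) x i j = godelOneForm x i * godelOneForm x j := by
  simp only [ricci, curvUp, christoffel_godel ha, Fin.sum_univ_four]
  fin_cases i <;> fin_cases j <;>
    simp [godelChristoffel, godelOneForm, expMono, pderiv_expMono, pderiv_zero, pderiv_one,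
      Real.exp_two_mul, Real.exp_neg] <;> (try field_simp) <;> ring

theorem sum_ginv_godel_mul_oneForm {a : ℝ} (ha : a ≠ 0) (x : Pt 4) (s : Fin 4) :
    ∑ r, ginv (godel a) x r s * godelOneForm x r
      = (Pi.single 3 (a ^ 2)⁻¹ : Fin 4 → ℝ) s := by
  fin_cases s <;> simp [ginv_godel ha, godelInv, godelOneForm, Fin.sum_univ_four] <;>
    field_simp <;> ring

theorem curvUp_godel_0103 {a : ℝ} (ha : a ≠ 0) (x : Pt 4) :
    curvUp (godel a) 0 1 0 3 x = Real.exp (x 0) / 2 := by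
  simp [curvUp, christoffel_godel ha, Fin.sum_univ_four, godelChristoffel, expMono,
    pderiv_expMono, pderiv_zero, Real.exp_neg]
  ring

theorem riemann_godel_0103 {a : ℝ} (ha : a ≠ 0) (x : Pt 4) :
    riemann (godel a) x 0 1 0 3 = -(a ^ 2 * Real.exp (x 0) / 2) := by
  simp [riemann, Fin.sum_univ_four, godel, curvUp_godel_0103 ha]
  ring

theorem dot42_riemann_ricci_godel {a : ℝ} (ha : a ≠ 0) (x : Pt 4) (i j l m : Fin 4) :
    dot42 (godel a) (riemann (godel a)) (ricci (godel a)) x i j l m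
      = -((a ^ 2)⁻¹ * (riemann (godel a) x l m i 3 * godelOneForm x j
          + riemann (godel a) x l m j 3 * godelOneForm x i)) :=
  dot42_of_eq_mul_self (ricci_godel ha x) (sum_ginv_godel_mul_oneForm ha x) i j l m

theorem tach2_ricci_godel_1212 {a : ℝ} (ha : a ≠ 0) (x : Pt 4) :
    tach2 (godel a) (ricci (godel a)) x 1 2 1 2 = a ^ 2 * Real.exp (x 0) ^ 2 := by
  simp [tach2, godel, ricci_godel ha, godelOneForm, sq]

/-- The Gödel spacetime is not Ricci-pseudosymmetric: at every point
the (0,4)-tensors `R·S` and `Q(g,S)` are linearly independent; in particular there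
is no real number `L` with `R·S = L·Q(g,S)` at any point. -/
theorem godel_not_ricci_pseudosymmetric (a : ℝ) (ha : 0 < a) :
    (∀ x : Pt 4, LinearIndependent ℝ
      ![dot42 (godel a) (riemann (godel a)) (ricci (godel a)) x,
        tach2 (godel a) (ricci (godel a)) x]) ∧
    (∀ x : Pt 4, ¬ ∃ L : ℝ, ∀ i j l m : Fin 4,
        dot42 (godel a) (riemann (godel a)) (ricci (godel a)) x i j l m
          = L * tach2 (godel a) (ricci (godel a)) x i j l m) := by
  have ha₀ : a ≠ 0 := ha.ne'
  have hR : ∀ x j k, riemann (godel a) x 1 2 j k = 0 := fun x =>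
    riemann_eq_zero_of_christoffel_eq_zero (christoffel_godel_two ha₀) x 1
  have hindep : ∀ x : Pt 4, LinearIndependent ℝ
      ![dot42 (godel a) (riemann (godel a)) (ricci (godel a)) x,
        tach2 (godel a) (ricci (godel a)) x] := by
    intro x
    refine .pair_of_dual (componentDual 0 1 0 1) (componentDual 1 2 1 2) ?_ ?_ ?_
    · simp [dot42_riemann_ricci_godel ha₀, riemann_godel_0103 ha₀, godelOneForm, ha₀]
    · simp [dot42_riemann_ricci_godel ha₀, hR]
    · simp [tach2_ricci_godel_1212 ha₀, ha₀]
  refine ⟨hindep, fun x ⟨L, hL⟩ => (hindep x).pair_ne_smul L ?_⟩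
  funext i j l m
  exact hL i j l m
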